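/- arXiv:2007.01428 — 5 statements merged into one kernel-verified Lean document; each statement's English description precedes it below -/
import Mathlib

section
/- Let Ω ⊆ ℝ² be open, bounded, and nonempty, and suppose Metric.ball c ρ ⊆ Ω with ρ > 0. Then there exists a point c' ∈ Ω such that Metric.ball c ρ ⊆ Metric.ball c' (r c') ⊆ Ω, the ball Metric.ball c' (r c') is a maximal inscribed ball of Ω (so c' ∈ MA(Ω)), and ρ ≤ r c'. -/
open Metric Set

noncomputable section

abbrev Plane := EuclideanSpace ℝ (Fin 2)

/-- Radius function: distance to the complement of `Ω`. -/
def radiusFn (Ω : Set Plane) (x : Plane) : ℝ := Metric.infDist x Ωᶜ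

/-- An open ball `Metric.ball c ρ` is a *maximal inscribed ball* of `Ω` if it is contained
in `Ω` and every open ball `B'` with `Metric.ball c ρ ⊆ B' ⊆ Ω` equals `Metric.ball c ρ`. -/
def IsMaxInscribedBall (Ω : Set Plane) (c : Plane) (ρ : ℝ) : Prop :=
  Metric.ball c ρ ⊆ Ω ∧
    ∀ (c' : Plane) (ρ' : ℝ), Metric.ball c ρ ⊆ Metric.ball c' ρ' →
      Metric.ball c' ρ' ⊆ Ω → Metric.ball c' ρ' = Metric.ball c ρ

/-- The medial axis of `Ω`. -/
def medialAxis (Ω : Set Plane) : Set Plane :=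
  {x ∈ Ω | IsMaxInscribedBall Ω x (radiusFn Ω x)}

/-- Converse of `ball_subset_ball'` in a nontrivial real normed space. -/
lemma dist_add_le_of_ball_subset_ball {a b : Plane} {s t : ℝ} (hs : 0 < s)
    (h : Metric.ball a s ⊆ Metric.ball b t) : dist a b + s ≤ t := by
  by_contra hlt
  push_neg at hlt
  set ε : ℝ := min s (dist a b + s - t) / 2 with hε
  have hε0 : 0 < ε := by
    have : 0 < dist a b + s - t := by linarith
    positivity
  have hεs : ε < s := by
    have h1 : min s (dist a b + s - t) ≤ s := min_le_left _ _
    linarith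
  have hεt : t ≤ dist a b + s - 2 * ε := by
    have h2 : 2 * ε ≤ dist a b + s - t := by
      have := min_le_right s (dist a b + s - t); linarith
    linarith
  -- choose a unit vector v in the direction of a - b
  obtain ⟨u, hu⟩ : ∃ u : Plane, ‖u‖ = 1 := exists_norm_eq Plane zero_le_one
  obtain ⟨v, hvnorm, hab_smul⟩ : ∃ v : Plane, ‖v‖ = 1 ∧ a - b = ‖a - b‖ • v := by
    by_cases hab : a = b
    · exact ⟨u, hu, by simp [hab]⟩
    · have hne0 : a - b ≠ 0 := sub_ne_zero.mpr hab
      refine ⟨‖a - b‖⁻¹ • (a - b), ?_, ?_⟩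
      · rw [norm_smul, norm_inv, norm_norm, inv_mul_cancel₀ (norm_ne_zero_iff.mpr hne0)]
      · rw [smul_smul, mul_inv_cancel₀ (norm_ne_zero_iff.mpr hne0), one_smul]
  set x : Plane := a + (s - ε) • v with hx
  have hxa : dist x a = s - ε := by
    rw [hx, dist_eq_norm]
    simp [norm_smul, hvnorm, abs_of_nonneg (by linarith : (0:ℝ) ≤ s - ε)]
  have hxmem : x ∈ Metric.ball a s := by
    rw [mem_ball, hxa]; linarith
  have hxb : dist x b = dist a b + (s - ε) := by
    rw [hx, dist_eq_norm]
    have : a + (s - ε) • v - b = (‖a - b‖ + (s - ε)) • v := by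
      rw [add_smul, ← hab_smul]; abel
    rw [this, norm_smul, hvnorm, mul_one, dist_eq_norm, Real.norm_eq_abs,
      abs_of_nonneg (by have := norm_nonneg (a - b); linarith : (0:ℝ) ≤ ‖a - b‖ + (s - ε))]
  have := h hxmem
  rw [mem_ball, hxb] at this
  linarith

lemma le_radiusFn_of_ball_subset {Ω : Set Plane} (hcne : Ωᶜ.Nonempty) {x : Plane} {s : ℝ}
    (h : Metric.ball x s ⊆ Ω) : s ≤ radiusFn Ω x := by
  by_contra hlt
  push_neg at hlt
  obtain ⟨y, hy, hdy⟩ := (Metric.infDist_lt_iff hcne).mp hlt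
  exact hy (h (Metric.mem_ball'.mpr hdy))

/-- any inscribed ball of an open bounded nonempty domain can be enlarged to a
maximal inscribed ball centered on the medial axis. -/
theorem exists_maxInscribedBall_containing (Ω : Set Plane) (hΩ : IsOpen Ω)
    (hbd : Bornology.IsBounded Ω) (hne : Ω.Nonempty)
    (c : Plane) (ρ : ℝ) (hρ : 0 < ρ) (hsub : Metric.ball c ρ ⊆ Ω) :
    ∃ c' ∈ Ω, Metric.ball c ρ ⊆ Metric.ball c' (radiusFn Ω c') ∧
      Metric.ball c' (radiusFn Ω c') ⊆ Ω ∧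
      IsMaxInscribedBall Ω c' (radiusFn Ω c') ∧
      c' ∈ medialAxis Ω ∧ ρ ≤ radiusFn Ω c' := by
  have hcne : Ωᶜ.Nonempty := by
    by_contra h
    rw [Set.not_nonempty_iff_eq_empty, Set.compl_empty_iff] at h
    exact NormedSpace.unbounded_univ ℝ Plane (h ▸ hbd)
  have hrcont : Continuous (radiusFn Ω) := Metric.continuous_infDist_pt _
  have hballr : ∀ x : Plane, Metric.ball x (radiusFn Ω x) ⊆ Ω := fun x =>
    Metric.ball_infDist_compl_subset
  set S : Set Plane := closure Ω ∩ {x | ρ + dist x c ≤ radiusFn Ω x} with hS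
  have hScl : IsClosed S :=
    isClosed_closure.inter (isClosed_le (by fun_prop) hrcont)
  have hSbd : Bornology.IsBounded S := hbd.closure.subset Set.inter_subset_left
  have hScomp : IsCompact S := Metric.isCompact_of_isClosed_isBounded hScl hSbd
  have hcS : c ∈ S := by
    constructor
    · exact subset_closure (hsub (Metric.mem_ball_self hρ))
    · simpa using le_radiusFn_of_ball_subset hcne hsub
  obtain ⟨c', hc'S, hmax⟩ := hScomp.exists_isMaxOn ⟨c, hcS⟩ hrcont.continuousOn
  have hc'r : ρ + dist c' c ≤ radiusFn Ω c' := hc'S.2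
  have hρr : ρ ≤ radiusFn Ω c' := le_trans (le_add_of_nonneg_right dist_nonneg) hc'r
  have hrpos : 0 < radiusFn Ω c' := lt_of_lt_of_le hρ hρr
  have hc'Ω : c' ∈ Ω := by
    by_contra h
    have : radiusFn Ω c' = 0 := Metric.infDist_zero_of_mem h
    linarith
  have hbsub : Metric.ball c ρ ⊆ Metric.ball c' (radiusFn Ω c') :=
    ball_subset_ball' (by rw [dist_comm]; linarith)
  have hmaxball : IsMaxInscribedBall Ω c' (radiusFn Ω c') := by
    refine ⟨hballr c', fun c'' ρ'' h1 h2 => ?_⟩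
    have hd1 : dist c' c'' + radiusFn Ω c' ≤ ρ'' :=
      dist_add_le_of_ball_subset_ball hrpos h1
    have hρ''pos : 0 < ρ'' := by
      have := dist_nonneg (x := c') (y := c''); linarith
    have hr'' : ρ'' ≤ radiusFn Ω c'' := le_radiusFn_of_ball_subset hcne h2
    have hc''S : c'' ∈ S := by
      constructor
      · exact subset_closure (h2 (Metric.mem_ball_self hρ''pos))
      · have hd2 : dist c c'' + ρ ≤ ρ'' := by
          have := dist_add_le_of_ball_subset_ball hρ (hbsub.trans h1)
          linarith
        simp only [Set.mem_setOf_eq]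
        rw [dist_comm]
        linarith
    have hle : radiusFn Ω c'' ≤ radiusFn Ω c' := hmax hc''S
    have hdist0 : dist c' c'' = 0 := le_antisymm (by linarith) dist_nonneg
    have hcc : c'' = c' := (dist_eq_zero.mp hdist0).symm
    have hρeq : ρ'' = radiusFn Ω c' := by
      subst hcc
      simp only [dist_self] at hd1
      linarith
    rw [hcc, hρeq]
  exact ⟨c', hc'Ω, hbsub, hballr c', hmaxball, ⟨hc'Ω, hmaxball⟩, hρr⟩
end
end

section
/- Let C be a nonempty family of open balls in ℝ², each of positive radius, that is totally ordered by set inclusion and whose radii are bounded above. Then the union of all balls in C is itself an open ball, whose radius is the supremum of the radii of the balls in C. -/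
open Metric Set

noncomputable section

lemma aux_ball_subset {x y : Plane} {r s : ℝ} (hr : 0 < r)
    (h : Metric.ball x r ⊆ Metric.ball y s) : dist x y + r ≤ s := by
  obtain ⟨u, hu1, hu⟩ : ∃ u : Plane, ‖u‖ = 1 ∧
      ∀ t : ℝ, 0 ≤ t → dist (x + t • u) y = dist x y + t := by
    by_cases hxy : x = y
    · refine ⟨EuclideanSpace.single 0 1, by simp, fun t ht => ?_⟩
      subst hxy
      simp [dist_eq_norm, norm_smul, abs_of_nonneg ht]
    · have hd : 0 < ‖x - y‖ := by rwa [norm_sub_pos_iff]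
      refine ⟨‖x - y‖⁻¹ • (x - y), ?_, fun t ht => ?_⟩
      · rw [norm_smul, norm_inv, norm_norm, inv_mul_cancel₀ hd.ne']
      · have heq : x + t • (‖x - y‖⁻¹ • (x - y)) - y
            = (1 + t * ‖x - y‖⁻¹) • (x - y) := by
          rw [smul_smul, add_smul, one_smul, add_sub_right_comm]
        have hnn : (0:ℝ) ≤ 1 + t * ‖x - y‖⁻¹ := by positivity
        rw [dist_eq_norm, heq, norm_smul, Real.norm_eq_abs, abs_of_nonneg hnn,
          dist_eq_norm]
        field_simp
  have hd : dist x y < s := mem_ball.mp (h (mem_ball_self hr))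
  apply le_of_forall_pos_le_add
  intro ε hε
  rcases le_or_gt r ε with hle | hlt
  · linarith
  · have hmem : x + (r - ε) • u ∈ Metric.ball x r := by
      rw [mem_ball, dist_eq_norm, add_sub_cancel_left, norm_smul, hu1,
        Real.norm_eq_abs, abs_of_nonneg (by linarith)]
      linarith
    have := mem_ball.mp (h hmem)
    rw [hu (r - ε) (by linarith)] at this
    linarith

/-- the union of a nonempty family of open balls of positive radius that is
totally ordered by inclusion and has radii bounded above is itself an open ball whose
radius is the supremum of the radii. -/
theorem iUnion_chain_balls_eq_ball {ι : Type*} [Nonempty ι]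
    (c : ι → Plane) (ρ : ι → ℝ) (hρ : ∀ i, 0 < ρ i)
    (hchain : ∀ i j, Metric.ball (c i) (ρ i) ⊆ Metric.ball (c j) (ρ j) ∨
      Metric.ball (c j) (ρ j) ⊆ Metric.ball (c i) (ρ i))
    (hbdd : BddAbove (Set.range ρ)) :
    ∃ c₀ : Plane, (⋃ i, Metric.ball (c i) (ρ i)) = Metric.ball c₀ (⨆ i, ρ i) := by
  set R := ⨆ i, ρ i with hR
  have hρle : ∀ i, ρ i ≤ R := fun i => le_ciSup hbdd i
  have hRpos : 0 < R := lt_of_lt_of_le (hρ (Classical.arbitrary ι)) (hρle _)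
  have hsub : ∀ i j, Metric.ball (c i) (ρ i) ⊆ Metric.ball (c j) (ρ j) →
      dist (c i) (c j) + ρ i ≤ ρ j := fun i j h =>
    aux_ball_subset (hρ i) h
  have hex : ∀ n : ℕ, ∃ i, R - 1/(n+1) < ρ i := by
    intro n
    apply exists_lt_of_lt_ciSup
    have : (0:ℝ) < 1/(n+1) := by positivity
    linarith
  choose s hs using hex
  have hdist : ∀ i n, dist (c i) (c (s n)) ≤ (R - ρ i) + 1/(n+1) := by
    intro i n
    have h3 : 0 ≤ R - ρ i := by linarith [hρle i]
    have h4 : (0:ℝ) < 1/(n+1) := by positivity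
    rcases hchain i (s n) with h | h
    · have := hsub _ _ h
      have := hρle (s n)
      linarith
    · have h1 := hsub _ _ h
      have h2 := hs n
      rw [dist_comm]
      linarith
  have hcauchy : CauchySeq (fun n => c (s n)) := by
    apply cauchySeq_of_le_tendsto_0 (fun N : ℕ => 1/(N+1))
    · intro n m N hn hm
      have h4 : 1/((n:ℝ)+1) ≤ 1/((N:ℝ)+1) := by
        apply one_div_le_one_div_of_le
        · positivity
        · exact_mod_cast by linarith
      have h5 : 1/((m:ℝ)+1) ≤ 1/((N:ℝ)+1) := by
        apply one_div_le_one_div_of_le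
        · positivity
        · exact_mod_cast by linarith
      rcases hchain (s n) (s m) with h | h
      · have h1 := hsub _ _ h
        have h2 := hs n
        have h3 := hρle (s m)
        linarith
      · have h1 := hsub _ _ h
        have h2 := hs m
        have h3 := hρle (s n)
        rw [dist_comm]
        linarith
    · exact tendsto_one_div_add_atTop_nhds_zero_nat
  obtain ⟨c₀, hc₀⟩ := cauchySeq_tendsto_of_complete hcauchy
  have hlim : ∀ i, dist (c i) c₀ ≤ R - ρ i := by
    intro i
    have h1 : Filter.Tendsto (fun n => dist (c i) (c (s n))) Filter.atTop
        (nhds (dist (c i) c₀)) := tendsto_const_nhds.dist hc₀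
    have h2 : Filter.Tendsto (fun n : ℕ => (R - ρ i) + 1/(n+1)) Filter.atTop
        (nhds ((R - ρ i) + 0)) :=
      tendsto_const_nhds.add tendsto_one_div_add_atTop_nhds_zero_nat
    rw [add_zero] at h2
    exact le_of_tendsto_of_tendsto' h1 h2 (fun n => hdist i n)
  refine ⟨c₀, subset_antisymm ?_ ?_⟩
  · apply iUnion_subset
    intro i x hx
    rw [mem_ball] at hx ⊢
    calc dist x c₀ ≤ dist x (c i) + dist (c i) c₀ := dist_triangle _ _ _
      _ < ρ i + (R - ρ i) := by have := hlim i; linarith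
      _ = R := by ring
  · intro x hx
    rw [mem_ball] at hx
    obtain ⟨n, hn⟩ := exists_nat_one_div_lt (show 0 < (R - dist x c₀)/2 by linarith)
    have h1 : dist (c (s n)) c₀ ≤ R - ρ (s n) := hlim (s n)
    have h2 := hs n
    have hx2 : dist x (c (s n)) < ρ (s n) := by
      have := dist_triangle x c₀ (c (s n))
      rw [dist_comm c₀ (c (s n))] at this
      have hn' : 1/((n:ℝ)+1) < (R - dist x c₀)/2 := hn
      linarith
    exact mem_iUnion.mpr ⟨s n, mem_ball.mpr hx2⟩
end
end

section
/- (Proposition 1: medial axis limited reconstruction equals opening.) Let Ω ⊆ ℝ² be open, bounded, and nonempty, and let ρ > 0. Then the limited reconstruction of Ω by g_ρ equals the morphological opening: ⋃_{x ∈ g_ρ} Metric.ball x (r x) = (Ω ⊖ B_ρ) ⊕ B_ρ. -/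
open Metric Set

noncomputable section

/-- Erosion of `Ω` by the open ball of radius `ρ`. -/
def erosion (Ω : Set Plane) (ρ : ℝ) : Set Plane := {x | Metric.ball x ρ ⊆ Ω}

/-- Dilation of `A` by the open ball of radius `ρ`. -/
def dilation (A : Set Plane) (ρ : ℝ) : Set Plane := ⋃ a ∈ A, Metric.ball a ρ

/-- Morphological opening of `Ω` by the open ball of radius `ρ`. -/
def opening (Ω : Set Plane) (ρ : ℝ) : Set Plane := dilation (erosion Ω ρ) ρ

/-- The subset `g_ρ` of the medial axis whose radius function is at least `ρ`. -/
def gSet (Ω : Set Plane) (ρ : ℝ) : Set Plane := {x ∈ medialAxis Ω | ρ ≤ radiusFn Ω x}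

/-!
A ball `B(c, r) ⊆ Ω` with `r ≥ ρ` is the union of the balls `B(y, ρ)` with `y ∈ B̄(c, r - ρ)`,
all of which lie in `Ω`; this gives one inclusion. Conversely, let `B(y, ρ) ⊆ Ω`, so that
`ρ ≤ r(y)`. The centres `c` of balls `B(c, r(c))` containing `B(y, r(y))` form the compact set
`{c | dist c y + r(y) ≤ r(c)}`, and a point `x` where `r` is maximal on it is on the medial axis:
a ball `B(c', ρ') ⊆ Ω` containing `B(x, r(x))` has `dist x c' + r(x) ≤ ρ' ≤ r(c')`, so `c'` is
again in the set and maximality of `r(x)` forces `c' = x` and `ρ' = r(x)`.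
-/

section NormedSpace

variable {E : Type*} [NormedAddCommGroup E] [NormedSpace ℝ E] [Nontrivial E]

theorem exists_dist_eq_dist_add (a b : E) {ε : ℝ} (hε : 0 ≤ ε) :
    ∃ p, dist p a = ε ∧ dist p b = dist a b + ε := by
  obtain ⟨u, hu, hray⟩ : ∃ u : E, ‖u‖ = ε ∧ SameRay ℝ (a - b) u := by
    rcases eq_or_ne a b with rfl | hab
    · obtain ⟨u, hu⟩ := exists_norm_eq E hε
      exact ⟨u, hu, by simp⟩
    · have hab' : ‖a - b‖ ≠ 0 := norm_ne_zero_iff.2 (sub_ne_zero.2 hab)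
      refine ⟨(ε / ‖a - b‖) • (a - b), ?_, SameRay.sameRay_nonneg_smul_right _ (by positivity)⟩
      rw [norm_smul, Real.norm_of_nonneg (by positivity), div_mul_cancel₀ _ hab']
  refine ⟨a + u, by simp [hu], ?_⟩
  rw [dist_eq_norm, add_sub_right_comm, hray.norm_add, hu, dist_eq_norm]

theorem dist_add_le_of_ball_subset_ball_s6 {a b : E} {ε δ : ℝ} (hε : 0 < ε)
    (h : ball a ε ⊆ ball b δ) : dist a b + ε ≤ δ := by
  obtain ⟨p, hpa, hpb⟩ := exists_dist_eq_dist_add a b hε.le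
  have hclosed : closedBall a ε ⊆ closedBall b δ := by
    rw [← closure_ball a hε.ne']
    exact (closure_mono h).trans closure_ball_subset_closedBall
  exact hpb ▸ hclosed (mem_closedBall.2 hpa.le)

end NormedSpace

theorem dilation_eq_thickening (A : Set Plane) (ρ : ℝ) : dilation A ρ = thickening ρ A :=
  thickening_eq_biUnion_ball.symm

theorem ball_subset_opening {Ω : Set Plane} {c : Plane} {ρ r : ℝ} (hρ : 0 < ρ) (hρr : ρ ≤ r)
    (h : ball c r ⊆ Ω) : ball c r ⊆ opening Ω ρ := by
  have herosion : closedBall c (r - ρ) ⊆ erosion Ω ρ := fun y hy =>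
    (ball_subset_ball' (by linarith [mem_closedBall.1 hy])).trans h
  calc ball c r = thickening ρ (closedBall c (r - ρ)) := by
        rw [thickening_closedBall hρ (sub_nonneg.2 hρr), add_sub_cancel]
    _ ⊆ opening Ω ρ := by
        rw [opening, dilation_eq_thickening]
        exact thickening_subset_of_subset ρ herosion

theorem ball_radiusFn_subset (Ω : Set Plane) (c : Plane) : ball c (radiusFn Ω c) ⊆ Ω :=
  ball_infDist_compl_subset

theorem le_radiusFn_of_ball_subset_s6 {Ω : Set Plane} (hbd : Bornology.IsBounded Ω) {c : Plane}
    {s : ℝ} (h : ball c s ⊆ Ω) : s ≤ radiusFn Ω c := by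
  have hcompl : Ωᶜ.Nonempty :=
    nonempty_compl.2 fun hΩ => NormedSpace.unbounded_univ ℝ Plane (hΩ ▸ hbd)
  exact (le_infDist hcompl).2 fun y hy => not_lt.1 fun hlt => hy (h (mem_ball'.2 hlt))

theorem isMaxInscribedBall_radiusFn {Ω : Set Plane} (hbd : Bornology.IsBounded Ω) {x : Plane}
    (hx : 0 < radiusFn Ω x)
    (hmax : ∀ c, dist c x + radiusFn Ω x ≤ radiusFn Ω c → radiusFn Ω c ≤ radiusFn Ω x) :
    IsMaxInscribedBall Ω x (radiusFn Ω x) := by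
  refine ⟨ball_radiusFn_subset Ω x, fun c ρ hsub hcΩ => ?_⟩
  have hxc : dist x c + radiusFn Ω x ≤ ρ := dist_add_le_of_ball_subset_ball_s6 hx hsub
  have hρc : ρ ≤ radiusFn Ω c := le_radiusFn_of_ball_subset_s6 hbd hcΩ
  have hcx : radiusFn Ω c ≤ radiusFn Ω x := hmax c (by rw [dist_comm]; linarith)
  obtain rfl : x = c := dist_eq_zero.1 (le_antisymm (by linarith) dist_nonneg)
  rw [show ρ = radiusFn Ω x by linarith [dist_nonneg (x := x) (y := x)]]

theorem exists_mem_medialAxis_dist_add_radiusFn_le {Ω : Set Plane}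
    (hbd : Bornology.IsBounded Ω) {y : Plane} (hy : 0 < radiusFn Ω y) :
    ∃ x ∈ medialAxis Ω, dist x y + radiusFn Ω y ≤ radiusFn Ω x := by
  set S := {c | dist c y + radiusFn Ω y ≤ radiusFn Ω c}
  have hpos : ∀ c ∈ S, 0 < radiusFn Ω c := fun c hc => by
    linarith [dist_nonneg (x := c) (y := y), hc.out]
  have hSΩ : S ⊆ Ω := fun c hc => ball_radiusFn_subset Ω c (mem_ball_self (hpos c hc))
  have hcont : Continuous (radiusFn Ω) := continuous_infDist_pt _
  have hS : IsCompact S :=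
    isCompact_of_isClosed_isBounded (isClosed_le (by fun_prop) hcont) (hbd.subset hSΩ)
  obtain ⟨x, hxS, hxmax⟩ := hS.exists_isMaxOn ⟨y, by simp [S]⟩ hcont.continuousOn
  refine ⟨x, ⟨hSΩ hxS, isMaxInscribedBall_radiusFn hbd (hpos x hxS) fun c hc => hxmax ?_⟩, hxS⟩
  show dist c y + radiusFn Ω y ≤ radiusFn Ω c
  linarith [dist_triangle c x y, hxS.out]

theorem limitedReconstruction_eq_opening_general (Ω : Set Plane)
    (hbd : Bornology.IsBounded Ω) (ρ : ℝ) (hρ : 0 < ρ) :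
    (⋃ x ∈ gSet Ω ρ, Metric.ball x (radiusFn Ω x)) = opening Ω ρ := by
  refine Subset.antisymm
    (iUnion₂_subset fun x hx => ball_subset_opening hρ hx.2 (ball_radiusFn_subset Ω x)) ?_
  intro z hz
  obtain ⟨y, hy, hzy⟩ := mem_iUnion₂.1 hz
  have hρy : ρ ≤ radiusFn Ω y := le_radiusFn_of_ball_subset_s6 hbd hy
  obtain ⟨x, hx, hxy⟩ := exists_mem_medialAxis_dist_add_radiusFn_le hbd (hρ.trans_le hρy)
  have hyx : ball y (radiusFn Ω y) ⊆ ball x (radiusFn Ω x) :=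
    ball_subset_ball' (by rw [dist_comm]; linarith)
  exact mem_iUnion₂.2 ⟨x, ⟨hx, hρy.trans (by linarith [dist_nonneg (x := x) (y := y)])⟩,
    hyx (ball_subset_ball hρy hzy)⟩

/-- Proposition 1: the medial axis limited reconstruction by `g_ρ` equals the
morphological opening of `Ω` by the ball of radius `ρ`. -/
theorem limitedReconstruction_eq_opening (Ω : Set Plane) (hΩ : IsOpen Ω)
    (hbd : Bornology.IsBounded Ω) (hne : Ω.Nonempty) (ρ : ℝ) (hρ : 0 < ρ) :
    (⋃ x ∈ gSet Ω ρ, Metric.ball x (radiusFn Ω x)) = opening Ω ρ :=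
  limitedReconstruction_eq_opening_general Ω hbd ρ hρ
end
end

section
/- (Medial axis transform reconstructs the domain.) Let Ω ⊆ ℝ² be open, bounded, and nonempty. Then Ω = ⋃_{x ∈ MA(Ω)} Metric.ball x (r x). -/
open Metric Set

noncomputable section

/-- If one open ball (of positive radius) is contained in another,
the distance of centers plus the small radius is at most the big radius. -/
lemma key_ball {a b : Plane} {ε δ : ℝ} (hε : 0 < ε) (h : ball a ε ⊆ ball b δ) :
    dist a b + ε ≤ δ := by
  have main : ∀ t, 0 ≤ t → t < ε → dist a b + t < δ := by
    intro t ht htε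
    obtain ⟨u, hu⟩ : ∃ u : Plane, ‖u‖ = 1 := exists_norm_eq _ zero_le_one
    rcases eq_or_ne a b with rfl | hab
    · have hp : a + t • u ∈ ball a ε := by
        simp [mem_ball, dist_eq_norm, norm_smul, hu, abs_of_nonneg ht, htε]
      have := h hp
      rw [mem_ball, dist_eq_norm] at this
      simpa [norm_smul, hu, abs_of_nonneg ht] using this
    · have hnorm : ‖a - b‖ ≠ 0 := by
        simpa [sub_eq_zero] using hab
      set v : Plane := ‖a - b‖⁻¹ • (a - b) with hv
      have hvnorm : ‖v‖ = 1 := norm_smul_inv_norm (by simpa [sub_eq_zero] using hab)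
      have hp : a + t • v ∈ ball a ε := by
        simp [mem_ball, dist_eq_norm, norm_smul, hvnorm, abs_of_nonneg ht, htε]
      have hmem := h hp
      rw [mem_ball, dist_eq_norm] at hmem
      have heq : a + t • v - b = (‖a - b‖ + t) • v := by
        have : (‖a - b‖ : ℝ) • v = a - b := smul_inv_smul₀ hnorm (a - b)
        rw [add_smul, this]
        abel
      rw [heq, norm_smul, hvnorm, mul_one, Real.norm_eq_abs,
        abs_of_nonneg (by positivity)] at hmem
      rwa [dist_eq_norm]
  refine le_of_forall_lt fun s hs => ?_
  rcases le_or_gt s (dist a b) with h1 | h1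
  · exact lt_of_le_of_lt h1 (by simpa using main 0 le_rfl hε)
  · have := main (s - dist a b) (by linarith) (by linarith)
    linarith

/-- Any inscribed ball has radius at most the radius function at its center. -/
lemma radius_ge {Ω : Set Plane} (hc : Ωᶜ.Nonempty) {c : Plane} {ρ : ℝ}
    (h : ball c ρ ⊆ Ω) : ρ ≤ radiusFn Ω c := by
  by_contra hlt
  push_neg at hlt
  obtain ⟨y, hy, hdy⟩ := (Metric.infDist_lt_iff hc).mp hlt
  exact hy (h (by rwa [mem_ball, dist_comm]))

/-- the medial axis transform reconstructs the domain. -/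
theorem medialAxis_reconstruction (Ω : Set Plane) (hΩ : IsOpen Ω)
    (hbd : Bornology.IsBounded Ω) (hne : Ω.Nonempty) :
    Ω = ⋃ x ∈ medialAxis Ω, Metric.ball x (radiusFn Ω x) := by
  -- the complement is nonempty
  obtain ⟨R, hR⟩ := hbd.subset_closedBall 0
  obtain ⟨y₀, hy₀norm⟩ : ∃ y : Plane, ‖y‖ = |R| + 1 := exists_norm_eq _ (by positivity)
  have hy₀ : y₀ ∈ Ωᶜ := by
    intro hy
    have := hR hy
    rw [mem_closedBall, dist_zero_right, hy₀norm] at this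
    have := le_abs_self R
    linarith
  have hcne : Ωᶜ.Nonempty := ⟨y₀, hy₀⟩
  have hrc : Continuous (radiusFn Ω) := Metric.continuous_infDist_pt _
  apply Set.Subset.antisymm
  · -- every point lies in a maximal inscribed ball
    intro x hx
    have hrx : 0 < radiusFn Ω x :=
      (hΩ.isClosed_compl.notMem_iff_infDist_pos hcne).mp (by simpa using hx)
    set S : Set (Plane × ℝ) :=
      {p | dist x p.1 + radiusFn Ω x ≤ p.2 ∧ p.2 ≤ radiusFn Ω p.1} with hS
    have hSclosed : IsClosed S := by
      apply IsClosed.inter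
      · exact isClosed_le (by fun_prop) continuous_snd
      · exact isClosed_le continuous_snd (hrc.comp continuous_fst)
    have hSsub : S ⊆ closedBall (0 : Plane) R ×ˢ Icc 0 (R + ‖y₀‖) := by
      rintro ⟨c, ρ⟩ ⟨h1, h2⟩
      have hρpos : 0 < ρ := lt_of_lt_of_le (by positivity) h1
      have hrcpos : 0 < radiusFn Ω c := lt_of_lt_of_le hρpos h2
      have hcΩ : c ∈ Ω := by
        by_contra hc
        simp only [radiusFn] at hrcpos
        rw [Metric.infDist_zero_of_mem (show c ∈ Ωᶜ from hc)] at hrcpos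
        exact lt_irrefl 0 hrcpos
      constructor
      · exact hR hcΩ
      · refine ⟨le_of_lt hρpos, ?_⟩
        have hd : radiusFn Ω c ≤ dist c y₀ := Metric.infDist_le_dist_of_mem hy₀
        have hb : dist c y₀ ≤ dist c 0 + dist (0 : Plane) y₀ := dist_triangle _ _ _
        have hc0 : dist c 0 ≤ R := by simpa [mem_closedBall] using hR hcΩ
        have : dist (0 : Plane) y₀ = ‖y₀‖ := by simp [dist_eq_norm]
        linarith
    have hSbdd : Bornology.IsBounded S :=
      ((Metric.isBounded_closedBall).prod (Metric.isBounded_Icc 0 (R + ‖y₀‖))).subset hSsub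
    have hScompact : IsCompact S :=
      Metric.isCompact_of_isClosed_isBounded hSclosed hSbdd
    have hSne : (x, radiusFn Ω x) ∈ S := ⟨by simp, le_rfl⟩
    obtain ⟨⟨c₀, ρ₀⟩, hmem, hmax⟩ :=
      hScompact.exists_isMaxOn ⟨_, hSne⟩ continuous_snd.continuousOn
    obtain ⟨d0, d1⟩ := hmem
    have hρ₀pos : 0 < ρ₀ := lt_of_lt_of_le (by positivity) d0
    have hrc₀pos : 0 < radiusFn Ω c₀ := lt_of_lt_of_le hρ₀pos d1
    have heq : ρ₀ = radiusFn Ω c₀ :=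
      le_antisymm d1 (hmax (show (c₀, radiusFn Ω c₀) ∈ S from ⟨le_trans d0 d1, le_rfl⟩))
    have hc₀Ω : c₀ ∈ Ω := by
      have := (hΩ.isClosed_compl.notMem_iff_infDist_pos hcne).mpr hrc₀pos
      simpa using this
    have hball : ball c₀ (radiusFn Ω c₀) ⊆ Ω := Metric.ball_infDist_compl_subset
    have hMA : c₀ ∈ medialAxis Ω := by
      refine ⟨hc₀Ω, hball, ?_⟩
      intro c' ρ' hsub hsubΩ
      have hρ'pos : 0 < ρ' :=
        nonempty_ball.mp (Set.Nonempty.mono hsub (nonempty_ball.mpr hrc₀pos))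
      have e1 : dist c₀ c' + radiusFn Ω c₀ ≤ ρ' := key_ball hrc₀pos hsub
      have hx' : ball x (radiusFn Ω x) ⊆ ball c₀ (radiusFn Ω c₀) :=
        ball_subset_ball' (by linarith [d0, heq])
      have e2 : dist x c' + radiusFn Ω x ≤ ρ' := key_ball hrx (hx'.trans hsub)
      have e3 : ρ' ≤ radiusFn Ω c' := radius_ge hcne hsubΩ
      have e4 : ρ' ≤ ρ₀ := hmax (show (c', ρ') ∈ S from ⟨e2, e3⟩)
      have hd0 : dist c₀ c' = 0 := by
        have := dist_nonneg (x := c₀) (y := c')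
        linarith [e4, heq]
      have hcc : c' = c₀ := (eq_of_dist_eq_zero hd0).symm
      have hρeq : ρ' = radiusFn Ω c₀ := by
        linarith [e4, heq]
      rw [hcc, hρeq]
    have hxball : x ∈ ball c₀ (radiusFn Ω c₀) := by
      rw [mem_ball]
      linarith [d0, heq, hrx]
    exact Set.mem_biUnion hMA hxball
  · -- each ball in the union is contained in Ω
    intro y hy
    simp only [Set.mem_iUnion] at hy
    obtain ⟨c, _, hyc⟩ := hy
    exact Metric.ball_infDist_compl_subset hyc
end
end

section
/- (Opening nonempty exactly up to the inradius.) Let Ω ⊆ ℝ² be open, bounded, and nonempty, and let ρ > 0. Then the opening Ω ∘ B_ρ is nonempty if and only if ρ ≤ inr(Ω), where inr(Ω) := ⨆_{x ∈ Ω} Metric.infDist x Ωᶜ. -/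
open Metric Set

noncomputable section

/-- The inradius of `Ω`: the supremum over `Ω` of the distance to the complement. -/
def inr (Ω : Set Plane) : ℝ := ⨆ x ∈ Ω, Metric.infDist x Ωᶜ

/-- the opening `Ω ∘ B_ρ` (for `ρ > 0`) is nonempty iff `ρ ≤ inr Ω`. -/
theorem opening_nonempty_iff_le_inr (Ω : Set Plane) (hΩ : IsOpen Ω)
    (hbd : Bornology.IsBounded Ω) (hne : Ω.Nonempty) (ρ : ℝ) (hρ : 0 < ρ) :
    (opening Ω ρ).Nonempty ↔ ρ ≤ inr Ω := by
  have hcne : Ωᶜ.Nonempty := by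
    rw [Set.nonempty_compl]
    intro h
    exact NormedSpace.unbounded_univ ℝ Plane (h ▸ hbd)
  obtain ⟨y₀, hy₀⟩ := id hcne
  -- bound on the function
  obtain ⟨C, hC⟩ := hbd.subset_closedBall y₀
  set f : Plane → ℝ := fun x => Metric.infDist x Ωᶜ with hf
  have hfle : ∀ x ∈ Ω, f x ≤ max C 0 := fun x hx =>
    le_max_of_le_left ((Metric.infDist_le_dist_of_mem hy₀).trans (hC hx))
  have hbdd : BddAbove (Set.range fun x => ⨆ _ : x ∈ Ω, f x) := by
    refine ⟨max C 0, ?_⟩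
    rintro _ ⟨x, rfl⟩
    by_cases hx : x ∈ Ω
    · exact Real.iSup_le (fun _ => hfle x hx) (le_max_right _ _)
    · simp [hx, Real.iSup_of_isEmpty, le_max_right]
  have hle_inr : ∀ x ∈ Ω, f x ≤ inr Ω := by
    intro x hx
    have := le_ciSup hbdd x
    rwa [ciSup_pos hx] at this
  have key : ∀ x, ρ ≤ f x → Metric.ball x ρ ⊆ Ω := by
    intro x hx y hy
    by_contra hyΩ
    exact absurd (Metric.infDist_le_dist_of_mem (s := Ωᶜ) hyΩ) (by
      rw [Metric.mem_ball, dist_comm] at hy; linarith [hx])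
  constructor
  · rintro ⟨z, hz⟩
    obtain ⟨x, hx, hzx⟩ := by simpa [opening, dilation, erosion] using hz
    have hxΩ : x ∈ Ω := hx (Metric.mem_ball_self hρ)
    have hρfx : ρ ≤ f x := by
      by_contra h
      push_neg at h
      obtain ⟨y, hy, hdy⟩ := (Metric.infDist_lt_iff hcne).mp h
      exact hy (hx (by rwa [Metric.mem_ball, dist_comm]))
    exact hρfx.trans (hle_inr x hxΩ)
  · intro hρinr
    -- maximize f on closure Ω
    have hcont : Continuous f := Metric.continuous_infDist_pt Ωᶜ
    obtain ⟨x₀, hx₀cl, hmax⟩ :=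
      hbd.isCompact_closure.exists_isMaxOn hne.closure hcont.continuousOn
    have hsup_le : inr Ω ≤ f x₀ := by
      refine Real.iSup_le (fun x => ?_) Metric.infDist_nonneg
      by_cases hx : x ∈ Ω
      · rw [ciSup_pos hx]
        exact hmax (subset_closure hx)
      · simpa [hx, Real.iSup_of_isEmpty] using (Metric.infDist_nonneg : (0:ℝ) ≤ f x₀)
    have hρf : ρ ≤ f x₀ := hρinr.trans hsup_le
    have hx₀Ω : x₀ ∈ Ω := by
      by_contra h
      have : f x₀ = 0 := Metric.infDist_zero_of_mem h
      linarith
    exact ⟨x₀, Set.mem_biUnion (key x₀ hρf) (Metric.mem_ball_self hρ)⟩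
end
end
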